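/- Let c₁ and c₂ be two measurable real functions each satisfying [H1] and [H2], with constants c_{M,1}, c_{M,2} as in [H1], and set q_j = 1 − 1/c_j², γ_{0,j} = ess sup |q_j| for j = 1, 2. For κ > 0 and j = 1,2, let u_{1,j} be the real-valued Jost solution from +∞ at k = iκ for c_j and set w_j(x, iκ) = −u_{1,j}'(x)/(κ u_{1,j}(x)); for κ = 0 set w_j(x, i·0) = 1. Then for all κ ≥ 0, ∫_ℝ |w₁(x, iκ) − w₂(x, iκ)| dx ≤ (1/α) ∫_ℝ |q₁(x) − q₂(x)| dx, where α = 2/(2 + c_{M,1}² γ_{0,1}) + 2/(2 + c_{M,2}² γ_{0,2}). -/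

import Mathlib

/-!
For `κ > 0` let `u, v` be the Jost solutions for `c₁, c₂`. Their Wronskian `W = u v' - u' v`
satisfies `W' = κ² (q₁ - q₂) u v` and tends to `0` at `+∞`, while `w₁ - w₂ = W / (κ u v)`.
Comparing `u` with the solution `e^{-κβx}` of `y'' = κ²β² y` (again through a Wronskian) shows
that `e^{κβx} u(x)` is nonincreasing as soon as `β ≤ 1` and `β² ≤ 1/c²` a.e.; the constant
`β = 2 / (2 + c_M² γ₀)` has this property, and `β = 0` shows that `u` has no zero. Hence
`|w₁ - w₂|(x) ≤ κ ∫_x^∞ e^{-κ(β₁+β₂)(t-x)} |q₁ - q₂|(t) dt`, and integrating in `x` (a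
convolution with a kernel of mass `1 / (κ(β₁+β₂))`) gives the bound with `α = β₁ + β₂`.
-/

open MeasureTheory Filter Topology

noncomputable section

/-- Hypothesis [H1]: `c` is essentially bounded below away from `0` and bounded above. -/
def HypH1 (c : ℝ → ℝ) : Prop :=
  ∃ c₀ > (0 : ℝ), ∃ cM > (0 : ℝ), ∀ᵐ x : ℝ, c₀ < c x ∧ c x ≤ cM

/-- Hypothesis [H1] with explicit constants `c₀`, `cM`. -/
def HypH1c (c : ℝ → ℝ) (c₀ cM : ℝ) : Prop :=
  0 < c₀ ∧ 0 < cM ∧ ∀ᵐ x : ℝ, c₀ < c x ∧ c x ≤ cM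

/-- Hypothesis [H2]: `|c(x) - 1| ≤ C ⟨x⟩^{-1-δ}` almost everywhere. -/
def HypH2 (c : ℝ → ℝ) : Prop :=
  ∃ C > (0 : ℝ), ∃ δ > (0 : ℝ),
    ∀ᵐ x : ℝ, |c x - 1| ≤ C * (1 + x ^ 2) ^ (-(1 + δ) / 2)

/-- `u` is continuously differentiable, its derivative is locally absolutely continuous,
and `u'' + (k²/c²) u = 0` holds almost everywhere (equivalently, the integral formulation
of the second-order equation holds). -/
def SolvesHelmholtz (c : ℝ → ℝ) (k : ℂ) (u : ℝ → ℂ) : Prop :=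
  ContDiff ℝ 1 u ∧
  ∀ a b : ℝ, deriv u b = deriv u a + ∫ x in a..b, -(k ^ 2 / ((c x : ℂ) ^ 2)) * u x

/-- The Jost solution from `+∞` at `k` : `e^{-ikx} u(x) → 1` as `x → +∞`. -/
def IsJostPlus (c : ℝ → ℝ) (k : ℂ) (u : ℝ → ℂ) : Prop :=
  SolvesHelmholtz c k u ∧
  Tendsto (fun x : ℝ => Complex.exp (-(Complex.I * k * (x : ℂ))) * u x) atTop (𝓝 1)

/-- The Jost solution from `-∞` at `k` : `e^{ikx} u(x) → 1` as `x → -∞`. -/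
def IsJostMinus (c : ℝ → ℝ) (k : ℂ) (u : ℝ → ℂ) : Prop :=
  SolvesHelmholtz c k u ∧
  Tendsto (fun x : ℝ => Complex.exp (Complex.I * k * (x : ℂ)) * u x) atBot (𝓝 1)

/-- `q = 1 - 1/c²`. -/
def qfun (c : ℝ → ℝ) (x : ℝ) : ℝ := 1 - 1 / (c x) ^ 2

/-- `Q = 1 - 1/c`. -/
def Qfun (c : ℝ → ℝ) (x : ℝ) : ℝ := 1 - 1 / c x

/-- Real form of the equation at `k = iκ`: `u'' = (κ²/c²) u` a.e., with `u` of class `C¹`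
with locally absolutely continuous derivative. -/
def SolvesHelmholtzR (c : ℝ → ℝ) (κ : ℝ) (u : ℝ → ℝ) : Prop :=
  ContDiff ℝ 1 u ∧
  ∀ a b : ℝ, deriv u b = deriv u a + ∫ x in a..b, (κ ^ 2 / (c x) ^ 2) * u x

/-- The real-valued Jost solution from `+∞` at `k = iκ`: `e^{κx} u(x) → 1` as `x → +∞`. -/
def IsJostPlusR (c : ℝ → ℝ) (κ : ℝ) (u : ℝ → ℝ) : Prop :=
  SolvesHelmholtzR c κ u ∧
  Tendsto (fun x : ℝ => Real.exp (κ * x) * u x) atTop (𝓝 1)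

/-- `γ₀ = ess sup |q|`. -/
def gamma0 (c : ℝ → ℝ) : ℝ := essSup (fun x => |qfun c x|) volume

/-- `w(x, iκ)` built from a family of real Jost solutions, with the convention
`w(x, i·0) = 1`. -/
def wIK (U : ℝ → ℝ → ℝ) (κ x : ℝ) : ℝ :=
  if κ = 0 then 1 else -(deriv (U κ) x) / (κ * U κ x)

open Set Real
open scoped Convolution

theorem hasDerivAt_exp_mul (r x : ℝ) :
    HasDerivAt (fun x => exp (r * x)) (r * exp (r * x)) x := by
  simpa [mul_comm] using ((hasDerivAt_id x).const_mul r).exp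

theorem not_isBoundedUnder_of_le_deriv {f f' : ℝ → ℝ} {x m : ℝ} (hm : 0 < m)
    (hf : ∀ t, HasDerivAt f (f' t) t) (hf' : ∀ t, x < t → m ≤ f' t) :
    ¬IsBoundedUnder (· ≤ ·) atTop f := by
  have hgrowth : ∀ t, x ≤ t → m * (t - x) ≤ f t - f x := fun t ht =>
    (convex_Ici x).mul_sub_le_image_sub_of_le_deriv
      (fun t _ => (hf t).continuousAt.continuousWithinAt)
      (fun t _ => (hf t).differentiableAt.differentiableWithinAt)
      (fun t ht => (hf t).deriv ▸ hf' t (by rwa [interior_Ici] at ht)) x self_mem_Ici t ht ht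
  have hlin : Tendsto (fun t => f x + m * (t - x)) atTop atTop :=
    tendsto_atTop_add_const_left _ _
      (Tendsto.const_mul_atTop hm (tendsto_atTop_add_const_right _ _ tendsto_id))
  refine not_isBoundedUnder_of_tendsto_atTop (tendsto_atTop_mono' _ ?_ hlin)
  filter_upwards [eventually_ge_atTop x] with t ht
  linarith [hgrowth t ht]

theorem eq_neg_integral_Ioi_of_tendsto_zero {F h : ℝ → ℝ} {x : ℝ}
    (hF : ∀ b, F b - F x = ∫ t in x..b, h t) (hh : IntegrableOn h (Ioi x))
    (hF₀ : Tendsto F atTop (𝓝 0)) : F x = -∫ t in Ioi x, h t := by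
  have h₁ : Tendsto (fun b => F b - F x) atTop (𝓝 (0 - F x)) := hF₀.sub_const _
  have h₂ : Tendsto (fun b => F b - F x) atTop (𝓝 (∫ t in Ioi x, h t)) := by
    simpa only [hF, id] using intervalIntegral_tendsto_integral_Ioi x hh tendsto_id
  linarith [tendsto_nhds_unique h₁ h₂]

theorem integral_abs_le_of_abs_le_integral_Ioi_exp {d ρ : ℝ → ℝ} {K σ : ℝ} (hσ : 0 < σ)
    (hρ : Integrable ρ) (hd : ∀ x, |d x| ≤ K * ∫ t in Ioi x, exp (σ * (x - t)) * ρ t) :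
    ∫ x, |d x| ≤ K / σ * ∫ x, ρ x := by
  set k : ℝ → ℝ := (Iic 0).indicator fun y => exp (σ * y)
  have hk : Integrable k :=
    (integrable_indicator_iff measurableSet_Iic).2 (integrableOn_exp_mul_Iic hσ 0)
  have hk_int : ∫ y, k y = 1 / σ := by
    rw [integral_indicator measurableSet_Iic, integral_exp_mul_Iic hσ, mul_zero, exp_zero]
  have hconv : ∀ x, ∫ t in Ioi x, exp (σ * (x - t)) * ρ t =
      (ρ ⋆[ContinuousLinearMap.mul ℝ ℝ] k) x := by
    intro x
    rw [convolution_def, ← integral_Ici_eq_integral_Ioi, ← integral_indicator measurableSet_Ici]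
    congr 1
    ext t
    simp [k, indicator, mul_comm]
  calc ∫ x, |d x| ≤ ∫ x, K * (ρ ⋆[ContinuousLinearMap.mul ℝ ℝ] k) x :=
        integral_mono_of_nonneg (ae_of_all _ fun _ => abs_nonneg _)
          ((hρ.integrable_convolution _ hk).const_mul K)
          (ae_of_all _ fun x => (hd x).trans_eq (by rw [hconv]))
    _ = K / σ * ∫ x, ρ x := by
        rw [integral_const_mul, integral_convolution _ hρ hk, hk_int,
          ContinuousLinearMap.mul_apply']
        ring

/-- The integrated form of `u'' = V u`. -/
def SolvesSchrodinger (V u : ℝ → ℝ) : Prop :=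
  ContDiff ℝ 1 u ∧ ∀ a b : ℝ, deriv u b = deriv u a + ∫ x in a..b, V x * u x

def wronskian (u v : ℝ → ℝ) (x : ℝ) : ℝ := u x * deriv v x - deriv u x * v x

theorem wronskian_def (u v : ℝ → ℝ) :
    wronskian u v = fun x => u x * deriv v x - deriv u x * v x := rfl

theorem wronskian_exp_neg_mul (r : ℝ) (u : ℝ → ℝ) (x : ℝ) :
    wronskian (fun x => exp (-r * x)) u x = exp (-r * x) * (deriv u x + r * u x) := by
  rw [wronskian, (hasDerivAt_exp_mul (-r) x).deriv]
  ring

theorem solvesSchrodinger_exp_neg_mul (r : ℝ) :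
    SolvesSchrodinger (fun _ => r ^ 2) (fun x => exp (-r * x)) := by
  refine ⟨by fun_prop, fun a b => ?_⟩
  have hd : ∀ x, HasDerivAt (fun x => -r * exp (-r * x)) (r ^ 2 * exp (-r * x)) x := fun x =>
    ((hasDerivAt_exp_mul (-r) x).const_mul (-r)).congr_deriv (by ring)
  rw [funext fun x => (hasDerivAt_exp_mul (-r) x).deriv,
    intervalIntegral.integral_eq_sub_of_hasDerivAt (fun x _ => hd x)
      (by apply Continuous.intervalIntegrable; fun_prop)]
  ring

namespace SolvesSchrodinger

variable {V V₁ V₂ u v : ℝ → ℝ} {r s : ℝ}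

theorem continuous (hu : SolvesSchrodinger V u) : Continuous u := hu.1.continuous

theorem differentiable (hu : SolvesSchrodinger V u) : Differentiable ℝ u :=
  hu.1.differentiable one_ne_zero

theorem deriv_eq (hu : SolvesSchrodinger V u) (a : ℝ) :
    deriv u = fun x => deriv u a + ∫ t in a..x, V t * u t :=
  funext (hu.2 a)

theorem ae_hasDerivAt_deriv (hu : SolvesSchrodinger V u) (hV : LocallyIntegrable V) :
    ∀ᵐ x, HasDerivAt (deriv u) (V x * u x) x := by
  filter_upwards [LocallyIntegrable.ae_hasDerivAt_integral (hV.mul_continuous hu.continuous)]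
    with x hx
  rw [hu.deriv_eq 0]
  exact (hx 0).const_add _

theorem absolutelyContinuousOnInterval_deriv (hu : SolvesSchrodinger V u)
    (hV : LocallyIntegrable V) (a b : ℝ) : AbsolutelyContinuousOnInterval (deriv u) a b := by
  have hVu : IntervalIntegrable (fun x => V x * u x) volume a b :=
    ((hV.mul_continuous hu.continuous).integrableOn_isCompact isCompact_uIcc).intervalIntegrable
  rw [hu.deriv_eq a]
  exact contDiffOn_const.absolutelyContinuousOnInterval.fun_add
    (hVu.absolutelyContinuousOnInterval_intervalIntegral left_mem_uIcc)

theorem wronskian_sub (hu : SolvesSchrodinger V₁ u) (hv : SolvesSchrodinger V₂ v)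
    (hV₁ : LocallyIntegrable V₁) (hV₂ : LocallyIntegrable V₂) (a b : ℝ) :
    wronskian u v b - wronskian u v a = ∫ x in a..b, (V₂ x - V₁ x) * (u x * v x) := by
  have hac : ∀ {f : ℝ → ℝ}, ContDiff ℝ 1 f → AbsolutelyContinuousOnInterval f a b :=
    fun hf => hf.contDiffOn.absolutelyContinuousOnInterval
  have hW_ac : AbsolutelyContinuousOnInterval (wronskian u v) a b :=
    ((hac hu.1).mul (hv.absolutelyContinuousOnInterval_deriv hV₂ a b)).sub
      ((hu.absolutelyContinuousOnInterval_deriv hV₁ a b).mul (hac hv.1))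
  rw [← hW_ac.integral_deriv_eq_sub]
  refine intervalIntegral.integral_congr_ae ?_
  filter_upwards [hu.ae_hasDerivAt_deriv hV₁, hv.ae_hasDerivAt_deriv hV₂] with x hu' hv' _
  have := ((hu.differentiable x).hasDerivAt.fun_mul hv').fun_sub
    (hu'.fun_mul (hv.differentiable x).hasDerivAt)
  rw [wronskian_def, this.deriv]
  ring

theorem monotoneOn_wronskian_exp_neg_mul (hu : SolvesSchrodinger V u) (hV : LocallyIntegrable V)
    (hVr : ∀ᵐ x, r ^ 2 ≤ V x) (hu₀ : ∀ x ∈ Ici s, 0 ≤ u x) :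
    MonotoneOn (wronskian (fun x => exp (-r * x)) u) (Ici s) := by
  intro a ha b _ hab
  have hsub := (solvesSchrodinger_exp_neg_mul r).wronskian_sub hu (locallyIntegrable_const _)
    hV a b
  have : 0 ≤ ∫ x in a..b, (V x - r ^ 2) * (exp (-r * x) * u x) := by
    refine intervalIntegral.integral_nonneg_of_ae_restrict hab ?_
    filter_upwards [ae_restrict_mem measurableSet_Icc, ae_restrict_of_ae hVr] with x hx hVx
    exact mul_nonneg (by linarith) (mul_nonneg (exp_pos _).le (hu₀ x (le_trans ha hx.1)))
  linarith

theorem deriv_add_mul_nonpos (hu : SolvesSchrodinger V u) (hV : LocallyIntegrable V)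
    (hr : 0 ≤ r) (hVr : ∀ᵐ x, r ^ 2 ≤ V x) (hu₀ : ∀ x ∈ Ici s, 0 ≤ u x)
    (hbdd : IsBoundedUnder (· ≤ ·) atTop fun x => exp (r * x) * u x) :
    ∀ x ∈ Ici s, deriv u x + r * u x ≤ 0 := by
  intro x hx
  by_contra! hpos
  set Y := wronskian (fun x => exp (-r * x)) u with hY
  have hYx : 0 < Y x := by rw [hY, wronskian_exp_neg_mul]; exact mul_pos (exp_pos _) hpos
  have hφ : ∀ t, HasDerivAt (fun t => exp (r * t) * u t) (exp (2 * r * t) * Y t) t := fun t => by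
    refine ((hasDerivAt_exp_mul r t).mul (hu.differentiable t).hasDerivAt).congr_deriv ?_
    rw [hY, wronskian_exp_neg_mul, ← mul_assoc, ← exp_add]
    ring_nf
  have hY_mono := hu.monotoneOn_wronskian_exp_neg_mul hV hVr hu₀
  exact not_isBoundedUnder_of_le_deriv (mul_pos (exp_pos (2 * r * x)) hYx) hφ
    (fun t ht => mul_le_mul (exp_le_exp.2 (by nlinarith)) (hY_mono hx (le_trans hx ht.le) ht.le)
      hYx.le (exp_pos _).le) hbdd

theorem antitoneOn_exp_mul (hu : SolvesSchrodinger V u) (hV : LocallyIntegrable V)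
    (hr : 0 ≤ r) (hVr : ∀ᵐ x, r ^ 2 ≤ V x) (hu₀ : ∀ x ∈ Ici s, 0 ≤ u x)
    (hbdd : IsBoundedUnder (· ≤ ·) atTop fun x => exp (r * x) * u x) :
    AntitoneOn (fun x => exp (r * x) * u x) (Ici s) := by
  have hφ : ∀ x, HasDerivAt (fun x => exp (r * x) * u x)
      (exp (r * x) * (deriv u x + r * u x)) x := fun x =>
    ((hasDerivAt_exp_mul r x).mul (hu.differentiable x).hasDerivAt).congr_deriv (by ring)
  refine antitoneOn_of_deriv_nonpos (convex_Ici s)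
    (fun x _ => (hφ x).continuousAt.continuousWithinAt)
    (fun x _ => (hφ x).differentiableAt.differentiableWithinAt) fun x hx => ?_
  rw [interior_Ici] at hx
  rw [(hφ x).deriv]
  exact mul_nonpos_of_nonneg_of_nonpos (exp_pos _).le
    (hu.deriv_add_mul_nonpos hV hr hVr hu₀ hbdd x (mem_Ici_of_Ioi hx))

theorem pos (hu : SolvesSchrodinger V u) (hV : LocallyIntegrable V) (hV₀ : ∀ᵐ x, 0 ≤ V x)
    (hev : ∀ᶠ x in atTop, 0 < u x) (hbdd : IsBoundedUnder (· ≤ ·) atTop u) (x : ℝ) :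
    0 < u x := by
  by_contra! hx
  obtain ⟨R, hR⟩ := eventually_atTop.1 hev
  set S := {x | u x ≤ 0}
  have hSbdd : BddAbove S := ⟨R, fun y hy => by
    by_contra! h
    exact (hR y h.le).not_ge hy⟩
  -- `s` is the last zero of `u`; the case `r = 0` above makes `u` nonincreasing on `[s, ∞)`
  set s := sSup S
  have hs : u s ≤ 0 := (isClosed_le hu.continuous continuous_const).csSup_mem ⟨x, hx⟩ hSbdd
  have hgt : ∀ y, s < y → 0 < u y := fun y hy => not_le.1 fun h => hy.not_ge (le_csSup hSbdd h)
  have hu₀ : ∀ y ∈ Ici s, 0 ≤ u y := by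
    rw [← closure_Ioi]
    exact (isClosed_le continuous_const hu.continuous).closure_subset_iff.2 fun y hy =>
      (hgt y hy).le
  have hanti : AntitoneOn u (Ici s) := by
    simpa using hu.antitoneOn_exp_mul hV le_rfl (by simpa using hV₀) hu₀ (by simpa using hbdd)
  linarith [hgt (s + 1) (lt_add_one s),
    hanti self_mem_Ici (lt_add_one s).le (lt_add_one s).le]

theorem abs_wronskian_le {r₁ r₂ : ℝ} (hu : SolvesSchrodinger V₁ u) (hv : SolvesSchrodinger V₂ v)
    (hV₁ : LocallyIntegrable V₁) (hV₂ : LocallyIntegrable V₂)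
    (hΔ : Integrable fun x => V₂ x - V₁ x) (hu₀ : ∀ x, 0 ≤ u x) (hv₀ : ∀ x, 0 ≤ v x)
    (hr : 0 ≤ r₁ + r₂) (hu_anti : Antitone fun x => exp (r₁ * x) * u x)
    (hv_anti : Antitone fun x => exp (r₂ * x) * v x) (hW : Tendsto (wronskian u v) atTop (𝓝 0))
    (x : ℝ) :
    |wronskian u v x| ≤ u x * v x * ∫ t in Ioi x, exp ((r₁ + r₂) * (x - t)) * |V₂ t - V₁ t| := by
  have hdecay : ∀ t, x ≤ t → u t * v t ≤ u x * v x * exp ((r₁ + r₂) * (x - t)) := by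
    intro t ht
    have hprod := mul_le_mul (hu_anti ht) (hv_anti ht) (by positivity [hv₀ t])
      (by positivity [hu₀ x])
    rw [show (r₁ + r₂) * (x - t) = r₁ * x + r₂ * x - (r₁ * t + r₂ * t) by ring, exp_sub,
      exp_add, exp_add, mul_div_assoc', le_div_iff₀ (by positivity)]
    linarith
  have hexp_le : ∀ᵐ t ∂volume.restrict (Ioi x), ‖exp ((r₁ + r₂) * (x - t))‖ ≤ 1 := by
    filter_upwards [ae_restrict_mem measurableSet_Ioi] with t ht
    rw [norm_of_nonneg (exp_pos _).le, exp_le_one_iff]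
    nlinarith [mem_Ioi.1 ht]
  have hg : IntegrableOn (fun t => u x * v x * (exp ((r₁ + r₂) * (x - t)) * |V₂ t - V₁ t|))
      (Ioi x) :=
    (hΔ.abs.integrableOn.bdd_mul (by fun_prop) hexp_le).const_mul _
  have hbound : ∀ᵐ t ∂volume.restrict (Ioi x), ‖(V₂ t - V₁ t) * (u t * v t)‖ ≤
      u x * v x * (exp ((r₁ + r₂) * (x - t)) * |V₂ t - V₁ t|) := by
    filter_upwards [ae_restrict_mem measurableSet_Ioi] with t ht
    rw [norm_mul, norm_of_nonneg (mul_nonneg (hu₀ t) (hv₀ t)), Real.norm_eq_abs]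
    nlinarith [hdecay t (mem_Ioi.1 ht).le, abs_nonneg (V₂ t - V₁ t)]
  have hh : IntegrableOn (fun t => (V₂ t - V₁ t) * (u t * v t)) (Ioi x) :=
    hg.mono' ((hΔ.aestronglyMeasurable.mul
      (hu.continuous.mul hv.continuous).aestronglyMeasurable).restrict) hbound
  rw [eq_neg_integral_Ioi_of_tendsto_zero (fun b => hu.wronskian_sub hv hV₁ hV₂ x b) hh hW,
    abs_neg, ← integral_const_mul]
  exact norm_integral_le_of_norm_le hg hbound

end SolvesSchrodinger

namespace IsJostPlusR

variable {c c₁ c₂ u v : ℝ → ℝ} {κ r : ℝ}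

theorem solvesSchrodinger (hu : IsJostPlusR c κ u) :
    SolvesSchrodinger (fun x => κ ^ 2 / c x ^ 2) u :=
  hu.1

theorem tendsto_zero (hu : IsJostPlusR c κ u) (hκ : 0 < κ) : Tendsto u atTop (𝓝 0) := by
  have hdecay : Tendsto (fun x => exp (-κ * x)) atTop (𝓝 0) :=
    tendsto_exp_atBot.comp (tendsto_id.const_mul_atTop_of_neg (neg_neg_iff_pos.2 hκ))
  simpa [← mul_assoc, ← exp_add] using hdecay.mul hu.2

theorem eventually_pos (hu : IsJostPlusR c κ u) : ∀ᶠ x in atTop, 0 < u x := by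
  filter_upwards [hu.2.eventually_const_lt zero_lt_one] with x hx
  exact pos_of_mul_pos_right hx (exp_pos _).le

theorem isBoundedUnder_exp_mul (hu : IsJostPlusR c κ u) (hr : r ≤ κ) :
    IsBoundedUnder (· ≤ ·) atTop fun x => exp (r * x) * u x := by
  obtain ⟨M, hM⟩ := hu.2.isBoundedUnder_le
  refine ⟨M, eventually_map.2 ?_⟩
  filter_upwards [eventually_map.1 hM, hu.eventually_pos, eventually_ge_atTop (0 : ℝ)]
    with x hxM hx hx₀
  exact (mul_le_mul_of_nonneg_right (exp_le_exp.2 (by nlinarith)) hx.le).trans hxM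

theorem pos (hu : IsJostPlusR c κ u) (hκ : 0 < κ) (hV : LocallyIntegrable fun x => κ ^ 2 / c x ^ 2)
    (x : ℝ) : 0 < u x :=
  hu.solvesSchrodinger.pos hV (ae_of_all _ fun _ => by positivity) hu.eventually_pos
    (hu.tendsto_zero hκ).isBoundedUnder_le x

theorem antitone_exp_mul (hu : IsJostPlusR c κ u) (hκ : 0 < κ)
    (hV : LocallyIntegrable fun x => κ ^ 2 / c x ^ 2) (hr₀ : 0 ≤ r) (hrκ : r ≤ κ)
    (hr : ∀ᵐ x, r ^ 2 ≤ κ ^ 2 / c x ^ 2) : Antitone fun x => exp (r * x) * u x :=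
  fun _ _ hab => hu.solvesSchrodinger.antitoneOn_exp_mul hV hr₀ hr
    (fun x _ => (hu.pos hκ hV x).le) (hu.isBoundedUnder_exp_mul hrκ) self_mem_Ici hab hab

theorem deriv_nonpos (hu : IsJostPlusR c κ u) (hκ : 0 < κ)
    (hV : LocallyIntegrable fun x => κ ^ 2 / c x ^ 2) (x : ℝ) : deriv u x ≤ 0 := by
  simpa using hu.solvesSchrodinger.deriv_add_mul_nonpos hV le_rfl
    (ae_of_all _ fun _ => by rw [zero_pow two_ne_zero]; positivity)
    (fun x _ => (hu.pos hκ hV x).le)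
    (by simpa using (hu.tendsto_zero hκ).isBoundedUnder_le) x self_mem_Ici

theorem monotone_deriv (hu : IsJostPlusR c κ u) (hκ : 0 < κ)
    (hV : LocallyIntegrable fun x => κ ^ 2 / c x ^ 2) : Monotone (deriv u) := fun a b hab => by
  have hint : 0 ≤ ∫ x in a..b, κ ^ 2 / c x ^ 2 * u x :=
    intervalIntegral.integral_nonneg hab fun x _ => mul_nonneg (by positivity) (hu.pos hκ hV x).le
  linarith [hu.1.2 a b]

theorem isBoundedUnder_norm_deriv (hu : IsJostPlusR c κ u) (hκ : 0 < κ)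
    (hV : LocallyIntegrable fun x => κ ^ 2 / c x ^ 2) :
    IsBoundedUnder (· ≤ ·) atTop (norm ∘ deriv u) := by
  refine ⟨‖deriv u 0‖, eventually_map.2 ?_⟩
  filter_upwards [eventually_ge_atTop (0 : ℝ)] with x hx
  exact abs_le_abs_of_nonpos (hu.deriv_nonpos hκ hV x) (hu.monotone_deriv hκ hV hx)

theorem tendsto_wronskian (hu : IsJostPlusR c₁ κ u) (hv : IsJostPlusR c₂ κ v) (hκ : 0 < κ)
    (hV₁ : LocallyIntegrable fun x => κ ^ 2 / c₁ x ^ 2)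
    (hV₂ : LocallyIntegrable fun x => κ ^ 2 / c₂ x ^ 2) :
    Tendsto (wronskian u v) atTop (𝓝 0) := by
  rw [← sub_zero 0, wronskian_def]
  exact ((hu.tendsto_zero hκ).zero_mul_isBoundedUnder_le
    (hv.isBoundedUnder_norm_deriv hκ hV₂)).sub
    (isBoundedUnder_le_mul_tendsto_zero (hu.isBoundedUnder_norm_deriv hκ hV₁) (hv.tendsto_zero hκ))

theorem integral_abs_sub_le {β₁ β₂ : ℝ} (hu : IsJostPlusR c₁ κ u) (hv : IsJostPlusR c₂ κ v)
    (hκ : 0 < κ) (hV₁ : LocallyIntegrable fun x => κ ^ 2 / c₁ x ^ 2)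
    (hV₂ : LocallyIntegrable fun x => κ ^ 2 / c₂ x ^ 2)
    (hq : Integrable fun x => qfun c₁ x - qfun c₂ x)
    (hβ₁ : 0 ≤ β₁) (hβ₁' : β₁ ≤ 1) (hβ₁c : ∀ᵐ x, β₁ ^ 2 ≤ 1 / c₁ x ^ 2)
    (hβ₂ : 0 ≤ β₂) (hβ₂' : β₂ ≤ 1) (hβ₂c : ∀ᵐ x, β₂ ^ 2 ≤ 1 / c₂ x ^ 2) (hβ : 0 < β₁ + β₂) :
    ∫ x, |-deriv u x / (κ * u x) - -deriv v x / (κ * v x)| ≤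
      1 / (β₁ + β₂) * ∫ x, |qfun c₁ x - qfun c₂ x| := by
  have hΔ : ∀ x, κ ^ 2 / c₂ x ^ 2 - κ ^ 2 / c₁ x ^ 2 = κ ^ 2 * (qfun c₁ x - qfun c₂ x) :=
    fun x => by unfold qfun; ring
  have hΔint : Integrable fun x => κ ^ 2 / c₂ x ^ 2 - κ ^ 2 / c₁ x ^ 2 := by
    simpa only [hΔ] using hq.const_mul (κ ^ 2)
  have hrate : ∀ {c : ℝ → ℝ} {β : ℝ}, (∀ᵐ x, β ^ 2 ≤ 1 / c x ^ 2) →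
      ∀ᵐ x, (κ * β) ^ 2 ≤ κ ^ 2 / c x ^ 2 := fun h => h.mono fun x hx => by
    rw [mul_pow, ← mul_one_div (κ ^ 2)]
    exact mul_le_mul_of_nonneg_left hx (sq_nonneg κ)
  have hpoint : ∀ x, |-deriv u x / (κ * u x) - -deriv v x / (κ * v x)| ≤ 1 / κ *
      ∫ t in Ioi x, exp ((κ * β₁ + κ * β₂) * (x - t)) *
        |κ ^ 2 / c₂ t ^ 2 - κ ^ 2 / c₁ t ^ 2| := by
    intro x
    have hux := hu.pos hκ hV₁ x
    have hvx := hv.pos hκ hV₂ x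
    have hW := hu.solvesSchrodinger.abs_wronskian_le hv.solvesSchrodinger hV₁ hV₂ hΔint
      (fun y => (hu.pos hκ hV₁ y).le) (fun y => (hv.pos hκ hV₂ y).le) (by positivity)
      (hu.antitone_exp_mul hκ hV₁ (by positivity) (by nlinarith) (hrate hβ₁c))
      (hv.antitone_exp_mul hκ hV₂ (by positivity) (by nlinarith) (hrate hβ₂c))
      (hu.tendsto_wronskian hv hκ hV₁ hV₂) x
    have hd : -deriv u x / (κ * u x) - -deriv v x / (κ * v x) =
        wronskian u v x / (κ * (u x * v x)) := by
      rw [wronskian]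
      field_simp
      ring
    rw [hd, abs_div, abs_of_pos (by positivity : 0 < κ * (u x * v x)),
      div_le_iff₀ (by positivity)]
    calc _ ≤ _ := hW
      _ = _ := by field_simp
  calc _ ≤ 1 / κ / (κ * β₁ + κ * β₂) * ∫ x, |κ ^ 2 / c₂ x ^ 2 - κ ^ 2 / c₁ x ^ 2| :=
        integral_abs_le_of_abs_le_integral_Ioi_exp (by rw [← mul_add]; exact mul_pos hκ hβ)
          hΔint.abs hpoint
    _ = 1 / (β₁ + β₂) * ∫ x, |qfun c₁ x - qfun c₂ x| := by
        simp_rw [hΔ, abs_mul, abs_of_nonneg (sq_nonneg κ)]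
        rw [integral_const_mul]
        field_simp

end IsJostPlusR

section Coefficient

variable {c : ℝ → ℝ} {c₀ cM : ℝ}

theorem locallyIntegrable_div_sq (hm : Measurable c) (hc₀ : 0 < c₀) (hc : ∀ᵐ x, c₀ < c x)
    (κ : ℝ) : LocallyIntegrable fun x => κ ^ 2 / c x ^ 2 := by
  have hmeas : Measurable fun x => κ ^ 2 / c x ^ 2 := by fun_prop
  refine (memLp_top_of_bound hmeas.aestronglyMeasurable (κ ^ 2 / c₀ ^ 2) ?_).locallyIntegrable
    le_top
  filter_upwards [hc] with x hx
  rw [norm_of_nonneg (by positivity)]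
  exact div_le_div_of_nonneg_left (sq_nonneg κ) (by positivity) (by nlinarith)

theorem integrable_qfun (hm : Measurable c) (hc₀ : 0 < c₀) (hc : ∀ᵐ x, c₀ < c x)
    (h2 : HypH2 c) : Integrable (qfun c) := by
  obtain ⟨C, -, δ, hδ, hdecay⟩ := h2
  have hbracket : Integrable fun x : ℝ => (1 + x ^ 2) ^ (-(1 + δ) / 2) := by
    simpa using integrable_rpow_neg_one_add_norm_sq (E := ℝ) (μ := volume) (r := 1 + δ)
      (by simpa using hδ)
  refine (hbracket.const_mul (C * (1 / c₀ + 1 / c₀ ^ 2))).mono'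
    (by unfold qfun; fun_prop : Measurable (qfun c)).aestronglyMeasurable ?_
  filter_upwards [hc, hdecay] with x hx hx'
  have hcx : 0 < c x := hc₀.trans hx
  have hq : qfun c x = (c x - 1) * (1 / c x + 1 / c x ^ 2) := by
    unfold qfun
    field_simp
    ring
  have hfac : 1 / c x + 1 / c x ^ 2 ≤ 1 / c₀ + 1 / c₀ ^ 2 := by gcongr
  rw [Real.norm_eq_abs, hq, abs_mul, abs_of_pos (by positivity : 0 < 1 / c x + 1 / c x ^ 2)]
  calc |c x - 1| * (1 / c x + 1 / c x ^ 2)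
      ≤ C * (1 + x ^ 2) ^ (-(1 + δ) / 2) * (1 / c₀ + 1 / c₀ ^ 2) :=
        mul_le_mul hx' hfac (by positivity) ((abs_nonneg _).trans hx')
    _ = C * (1 / c₀ + 1 / c₀ ^ 2) * (1 + x ^ 2) ^ (-(1 + δ) / 2) := by ring

theorem ae_abs_qfun_le_gamma0 (hc₀ : 0 < c₀) (hc : ∀ᵐ x, c₀ < c x) :
    ∀ᵐ x, |qfun c x| ≤ gamma0 c := by
  refine ae_le_essSup ⟨1 + 1 / c₀ ^ 2, eventually_map.2 ?_⟩
  filter_upwards [hc] with x hx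
  have : 1 / c x ^ 2 ≤ 1 / c₀ ^ 2 := by gcongr
  rw [qfun, abs_le]
  constructor <;> nlinarith [one_div_nonneg.2 (sq_nonneg (c x))]

theorem gamma0_nonneg (hc₀ : 0 < c₀) (hc : ∀ᵐ x, c₀ < c x) : 0 ≤ gamma0 c :=
  let ⟨_, hx⟩ := (ae_abs_qfun_le_gamma0 hc₀ hc).exists
  (abs_nonneg _).trans hx

theorem sq_two_div_two_add_mul_le {M g y : ℝ} (hM : 0 < M) (hg : 0 ≤ g) (hyM : 1 / M ≤ y)
    (hyg : 1 - g ≤ y) : (2 / (2 + M * g)) ^ 2 ≤ y := by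
  have hMy : 1 ≤ M * y := by rwa [div_le_iff₀' hM] at hyM
  have hy : 0 ≤ y := (one_div_pos.2 hM).le.trans hyM
  rw [div_pow, div_le_iff₀ (by positivity)]
  -- `y (2 + Mg)² ≥ 4y + 4Myg ≥ 4y + 4g ≥ 4`
  nlinarith [mul_nonneg hy (mul_nonneg hM.le hg), mul_nonneg hg (sub_nonneg.2 hMy),
    sq_nonneg (M * g)]

theorem two_div_two_add_mul_mem_Ioc {M g : ℝ} (hM : 0 ≤ M) (hg : 0 ≤ g) :
    2 / (2 + M * g) ∈ Ioc 0 1 :=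
  ⟨by positivity, (div_le_one (by positivity)).2 (by nlinarith [mul_nonneg hM hg])⟩

theorem ae_sq_two_div_le_one_div_sq (h1 : HypH1c c c₀ cM) :
    ∀ᵐ x, (2 / (2 + cM ^ 2 * gamma0 c)) ^ 2 ≤ 1 / c x ^ 2 := by
  obtain ⟨hc₀, hcM, hc⟩ := h1
  have hlow : ∀ᵐ x, c₀ < c x := hc.mono fun _ h => h.1
  filter_upwards [hc, ae_abs_qfun_le_gamma0 hc₀ hlow] with x hx hq
  refine sq_two_div_two_add_mul_le (by positivity) (gamma0_nonneg hc₀ hlow) ?_ ?_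
  · exact one_div_le_one_div_of_le (by nlinarith [hc₀.trans hx.1])
      (pow_le_pow_left₀ (hc₀.trans hx.1).le hx.2 2)
  · rw [qfun, abs_le] at hq
    linarith [hq.2]

end Coefficient

/-- `L¹` comparison of `w₁(·, iκ)` and `w₂(·, iκ)` in terms of `‖q₁ - q₂‖_{L¹}`. -/
theorem w_ik_L1_comparison (c₁ c₂ : ℝ → ℝ) (hm₁ : Measurable c₁) (hm₂ : Measurable c₂)
    (c₀₁ c₀₂ cM₁ cM₂ : ℝ)
    (h1₁ : HypH1c c₁ c₀₁ cM₁) (h1₂ : HypH1c c₂ c₀₂ cM₂)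
    (h2₁ : HypH2 c₁) (h2₂ : HypH2 c₂)
    (U₁ U₂ : ℝ → ℝ → ℝ)
    (hU₁ : ∀ κ : ℝ, 0 < κ → IsJostPlusR c₁ κ (U₁ κ))
    (hU₂ : ∀ κ : ℝ, 0 < κ → IsJostPlusR c₂ κ (U₂ κ)) :
    ∀ κ : ℝ, 0 ≤ κ →
      (∫ x : ℝ, |wIK U₁ κ x - wIK U₂ κ x|) ≤
        (1 / (2 / (2 + cM₁ ^ 2 * gamma0 c₁) + 2 / (2 + cM₂ ^ 2 * gamma0 c₂))) *
          ∫ x : ℝ, |qfun c₁ x - qfun c₂ x| := by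
  intro κ hκ
  have hlow₁ : ∀ᵐ x, c₀₁ < c₁ x := h1₁.2.2.mono fun _ h => h.1
  have hlow₂ : ∀ᵐ x, c₀₂ < c₂ x := h1₂.2.2.mono fun _ h => h.1
  have hβ₁ := two_div_two_add_mul_mem_Ioc (sq_nonneg cM₁) (gamma0_nonneg h1₁.1 hlow₁)
  have hβ₂ := two_div_two_add_mul_mem_Ioc (sq_nonneg cM₂) (gamma0_nonneg h1₂.1 hlow₂)
  rcases hκ.eq_or_lt with rfl | hκ
  · simp only [wIK, if_pos, sub_self, abs_zero, integral_zero]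
    exact mul_nonneg (by positivity [hβ₁.1, hβ₂.1]) (integral_nonneg fun _ => abs_nonneg _)
  · simp only [wIK, if_neg hκ.ne']
    exact (hU₁ κ hκ).integral_abs_sub_le (hU₂ κ hκ) hκ
      (locallyIntegrable_div_sq hm₁ h1₁.1 hlow₁ κ) (locallyIntegrable_div_sq hm₂ h1₂.1 hlow₂ κ)
      ((integrable_qfun hm₁ h1₁.1 hlow₁ h2₁).sub (integrable_qfun hm₂ h1₂.1 hlow₂ h2₂))
      hβ₁.1.le hβ₁.2 (ae_sq_two_div_le_one_div_sq h1₁)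
      hβ₂.1.le hβ₂.2 (ae_sq_two_div_le_one_div_sq h1₂) (add_pos hβ₁.1 hβ₂.1)
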